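/- arXiv:1804.00321 — 3 statements merged into one kernel-verified Lean document; each statement's English description precedes it below -/
import Mathlib

section
/- If a is even, b is odd, and Γ is a finite abelian group of order abc with exactly one involution, then there does not exist a Γ-magic rectangle set MRS_Γ(a,b;c). -/
open Finset

/-- A Γ-magic rectangle set MRS_Γ(a,b;c): c arrays of size a×b whose entries are the
elements of Γ, each appearing exactly once, with constant row sums and column sums. -/
def IsMagicRectangleSet {Γ : Type*} [AddCommGroup Γ] (a b c : ℕ)
    (x : Fin c → Fin a → Fin b → Γ) : Prop :=
  Function.Bijective (fun q : Fin c × Fin a × Fin b => x q.1 q.2.1 q.2.2) ∧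
  (∃ ω : Γ, ∀ s i, ∑ j, x s i j = ω) ∧
  (∃ δ : Γ, ∀ s j, ∑ i, x s i j = δ)

/-- Γ has more than one involution (element of order 2). -/
def HasMoreThanOneInvolution (Γ : Type*) [AddCommGroup Γ] : Prop :=
  ∃ i j : Γ, i ≠ j ∧ addOrderOf i = 2 ∧ addOrderOf j = 2

theorem no_MRS_even_odd_unique_involution (Γ : Type*) [AddCommGroup Γ] [Fintype Γ]
    (a b c : ℕ) (ha : Even a) (hb : Odd b) (hcard : Fintype.card Γ = a * b * c)
    (ι : Γ) (hι : addOrderOf ι = 2) (huniq : ∀ j : Γ, addOrderOf j = 2 → j = ι) :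
    ¬ ∃ x : Fin c → Fin a → Fin b → Γ, IsMagicRectangleSet a b c x := by
  classical
  rintro ⟨x, hbij, ⟨ω, hω⟩, -⟩
  -- basic facts about ι
  have hι0 : ι ≠ 0 := by
    intro h
    rw [h, addOrderOf_zero] at hι
    omega
  have hι2 : ι + ι = 0 := by
    have := addOrderOf_nsmul_eq_zero ι
    rw [hι, two_nsmul] at this
    exact this
  have hnegι : -ι = ι := neg_eq_of_add_eq_zero_left hι2
  -- the sum of all elements of Γ is ι
  have hS : ∑ g : Γ, g = ι := by
    have h0 : ∑ g ∈ (univ : Finset Γ).erase ι, g = 0 := by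
      refine Finset.sum_involution (fun g _ => -g) (fun g _ => add_neg_cancel g)
        (fun g hg hgne => ?_) (fun g hg => ?_) (fun g _ => neg_neg g)
      · intro h
        apply Finset.ne_of_mem_erase hg
        apply huniq
        have hne : g ≠ 0 := hgne
        have h2 : g + g = 0 := by nth_rewrite 1 [← h]; exact neg_add_cancel g
        have hdvd : addOrderOf g ∣ 2 := by
          apply addOrderOf_dvd_of_nsmul_eq_zero
          rw [two_nsmul]; exact h2
        have hpos : addOrderOf g ≠ 1 := fun h1 =>
          hne (AddMonoid.addOrderOf_eq_one_iff.mp h1)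
        have h00 : addOrderOf g ≠ 0 := fun h1 =>
          (addOrderOf_eq_zero_iff.mp h1) (isOfFinAddOrder_of_finite g)
        have hle := Nat.le_of_dvd two_pos hdvd
        omega
      · simp only [Finset.mem_erase, Finset.mem_univ, and_true]
        intro hcontra
        apply Finset.ne_of_mem_erase hg
        have : g = -ι := by rw [← hcontra, neg_neg]
        rw [this, hnegι]
    have := Finset.add_sum_erase univ (fun g : Γ => g) (Finset.mem_univ ι)
    rw [h0, add_zero] at this
    exact this.symm
  -- the sum of all elements via row sums
  have hS2 : ∑ g : Γ, g = (c * a) • ω := by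
    rw [← Fintype.sum_bijective _ hbij _ (fun g : Γ => g) (fun q => rfl)]
    rw [Fintype.sum_prod_type]
    simp only [Fintype.sum_prod_type]
    simp only [hω, Finset.sum_const, Finset.card_univ, Fintype.card_fin, smul_smul]
  have hkey : ι = (c * a) • ω := by rw [← hS, hS2]
  -- multiply by odd b
  obtain ⟨m, hm⟩ := hb
  have hbι : b • ι = ι := by
    rw [hm, add_nsmul, one_nsmul, two_mul, add_nsmul]
    rw [← smul_add, hι2, smul_zero, zero_add]
  have habc : (a * b * c) • ω = 0 := by
    rw [← hcard]
    exact card_nsmul_eq_zero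
  have : b • ι = 0 := by
    rw [hkey, smul_smul, show b * (c * a) = a * b * c from by ring]
    exact habc
  rw [hbι] at this
  exact hι0 this
end

section
/- If exactly one of the numbers a, b, c is even and Γ is a finite abelian group of order abc with exactly one involution, then there does not exist a Γ-magic rectangle set MRS_Γ(a,b;c). -/
open Finset

theorem no_MRS_exactly_one_even_unique_involution (Γ : Type*) [AddCommGroup Γ] [Fintype Γ]
    (a b c : ℕ)
    (hparity : (Even a ∧ Odd b ∧ Odd c) ∨ (Odd a ∧ Even b ∧ Odd c) ∨
      (Odd a ∧ Odd b ∧ Even c))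
    (hcard : Fintype.card Γ = a * b * c)
    (ι : Γ) (hι : addOrderOf ι = 2) (huniq : ∀ j : Γ, addOrderOf j = 2 → j = ι) :
    ¬ ∃ x : Fin c → Fin a → Fin b → Γ, IsMagicRectangleSet a b c x := by
  classical
  rintro ⟨x, hbij, ⟨ω, hω⟩, ⟨δ, hδ⟩⟩
  haveI : Fact (Nat.Prime 2) := ⟨Nat.prime_two⟩
  have hι2 : ι + ι = 0 := by
    have h := addOrderOf_nsmul_eq_zero ι
    rw [hι, two_nsmul] at h
    exact h
  have hι0 : ι ≠ 0 := by
    intro h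
    rw [h, addOrderOf_zero] at hι
    omega
  -- sum of all elements of Γ equals ι
  have hpairset : (univ.filter (fun g : Γ => g = -g)) = ({0, ι} : Finset Γ) := by
    ext g
    simp only [mem_filter, mem_univ, true_and, mem_insert, mem_singleton]
    constructor
    · intro h
      rcases eq_or_ne g 0 with h0 | h0
      · exact Or.inl h0
      · refine Or.inr (huniq g ?_)
        refine addOrderOf_eq_prime ?_ h0
        rw [two_nsmul, ← eq_neg_iff_add_eq_zero]
        exact h
    · rintro (rfl | rfl)
      · simp
      · rw [eq_neg_iff_add_eq_zero]; exact hι2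
  have hrest : ∑ g ∈ univ.filter (fun g : Γ => ¬ g = -g), g = 0 := by
    refine Finset.sum_involution (fun g _ => -g) (fun g _ => add_neg_cancel g)
      (fun g hg _ => ?_) (fun g hg => ?_) (fun g hg => neg_neg g)
    · simp only [mem_filter, mem_univ, true_and] at hg
      exact fun h => hg h.symm
    · simp only [mem_filter, mem_univ, true_and, neg_neg] at hg ⊢
      exact fun h => hg h.symm
  have hSum : ∑ g : Γ, g = ι := by
    rw [← Finset.sum_filter_add_sum_filter_not univ (fun g : Γ => g = -g), hpairset, hrest,
      add_zero, Finset.sum_pair (Ne.symm hι0)]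
    simp
  -- sum of all entries
  have hre : ∑ g : Γ, g = ∑ s : Fin c, ∑ i : Fin a, ∑ j : Fin b, x s i j := by
    rw [← Fintype.sum_bijective _ hbij _ (fun g => g) (fun q => rfl)]
    rw [Fintype.sum_prod_type]
    exact Finset.sum_congr rfl fun s _ => Fintype.sum_prod_type _
  have hS1 : ι = (c * a) • ω := by
    rw [← hSum, hre]
    simp [hω, Finset.sum_const, Finset.card_univ, smul_smul]
  have hS2 : ι = (c * b) • δ := by
    rw [← hSum, hre]
    have : ∀ s : Fin c, ∑ i : Fin a, ∑ j : Fin b, x s i j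
        = ∑ j : Fin b, ∑ i : Fin a, x s i j := fun s => Finset.sum_comm
    simp only [this]
    simp [hδ, Finset.sum_const, Finset.card_univ, smul_smul]
  have hzero : ∀ g : Γ, (a * b * c) • g = 0 := by
    intro g
    rw [← hcard]
    exact card_nsmul_eq_zero
  have hoddsmul : ∀ m : ℕ, Odd m → m • ι = ι := by
    rintro m ⟨t, rfl⟩
    rw [add_nsmul, one_nsmul, two_mul, add_nsmul, ← smul_add, hι2, smul_zero, zero_add]
  rcases hparity with ⟨ha, hb, hc⟩ | ⟨ha, hb, hc⟩ | ⟨ha, hb, hc⟩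
  · -- b odd : multiply hS1 by b
    have : ι = 0 := by
      rw [← hoddsmul b hb, hS1, smul_smul, show b * (c * a) = a * b * c by ring, hzero]
    exact hι0 this
  · -- a odd : multiply hS2 by a
    have : ι = 0 := by
      rw [← hoddsmul a ha, hS2, smul_smul, show a * (c * b) = a * b * c by ring, hzero]
    exact hι0 this
  · have : ι = 0 := by
      rw [← hoddsmul b hb, hS1, smul_smul, show b * (c * a) = a * b * c by ring, hzero]
    exact hι0 this
end

section
/- If Γ ≅ Z_{2k+1} × (Z_2)^m with m ≥ 1, then there does not exist a Γ-magic rectangle set MRS_Γ(2k+1, 2; 2^{m−1}). -/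
open Finset

theorem no_MRS_odd_two (k m : ℕ) (hm : 1 ≤ m) :
    ¬ ∃ x : Fin (2 ^ (m - 1)) → Fin (2 * k + 1) → Fin 2 →
        ZMod (2 * k + 1) × (Fin m → ZMod 2),
      IsMagicRectangleSet (2 * k + 1) 2 (2 ^ (m - 1)) x := by
  rintro ⟨x, hbij, ⟨ω, hrow⟩, ⟨δ, hcol⟩⟩
  have two0 : (2 : ZMod 2) = 0 := by decide
  have odd_smul : ∀ v : ZMod 2, (2 * k + 1) • v = v := by
    intro v
    rw [nsmul_eq_mul]
    push_cast
    rw [two0]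
    ring
  have two_smul0 : ∀ v : ZMod 2, (2 : ℕ) • v = 0 := by
    intro v
    rw [nsmul_eq_mul]
    push_cast
    rw [two0]
    ring
  set z : ZMod (2 * k + 1) × (Fin m → ZMod 2) := ((k + 1) • ω.1, 0) with hzdef
  obtain ⟨⟨s, i, j⟩, hz⟩ := hbij.2 z
  simp only at hz
  -- rectangle sum two ways
  have hsum : (2 * k + 1) • ω = 2 • δ := by
    have h1 : ∑ i : Fin (2 * k + 1), ∑ j : Fin 2, x s i j = (2 * k + 1) • ω := by
      simp [hrow]
    have h2 : ∑ j : Fin 2, ∑ i : Fin (2 * k + 1), x s i j = 2 • δ := by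
      simp [hcol, two_nsmul]
    rw [Finset.sum_comm] at h1
    rw [h1] at h2
    exact h2
  have hω2 : ω.2 = 0 := by
    have h := congrArg Prod.snd hsum
    simp only [Prod.smul_snd] at h
    have hl : (2 * k + 1) • ω.2 = ω.2 := by
      funext p
      simpa using odd_smul (ω.2 p)
    have hr : (2 : ℕ) • δ.2 = 0 := by
      funext p
      simpa using two_smul0 (δ.2 p)
    rw [hl, hr] at h
    exact h
  have hzz : z + z = ω := by
    apply Prod.ext
    · show (k + 1) • ω.1 + (k + 1) • ω.1 = ω.1
      rw [← add_nsmul]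
      have he : (k + 1) + (k + 1) = (2 * k + 1) + 1 := by ring
      rw [he, add_nsmul, one_nsmul]
      have h0 : (2 * k + 1) • ω.1 = 0 := by
        rw [nsmul_eq_mul]
        simp [ZMod.natCast_self]
      rw [h0, zero_add]
    · show (0 : Fin m → ZMod 2) + 0 = ω.2
      rw [hω2, add_zero]
  -- row containing z
  have hrowsi : x s i 0 + x s i 1 = ω := by
    have := hrow s i
    rwa [Fin.sum_univ_two] at this
  have hne : x s i 0 ≠ x s i 1 := by
    intro h
    have := hbij.1 (a₁ := (s, i, 0)) (a₂ := (s, i, 1)) h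
    simp at this
  have hj : j = 0 ∨ j = 1 := by omega
  rcases hj with rfl | rfl
  · apply hne
    have h1 : x s i 1 = ω - z := by rw [← hrowsi, hz]; abel
    rw [hz, h1, ← hzz]; abel
  · apply hne
    have h1 : x s i 0 = ω - z := by rw [← hrowsi, hz]; abel
    rw [hz, h1, ← hzz]; abel
end
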